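/- arXiv:2311.03564 — 2 statements merged into one kernel-verified Lean document; each statement's English description precedes it below -/
import Mathlib

section
/- Fix an integer m ≥ 1 and a real α ∈ (0, ∞). There exists a constant C > 0, depending only on m and α, such that for every L ≥ 0 and every g : [0,1]^m → [0, ∞) that is α-smooth with constant L, one has sup_{a ∈ [0,1]^m} g(a) ≤ C · L^{m/(m+α)} · ( ∫_{[0,1]^m} g(a) da )^{α/(m+α)}, where da denotes Lebesgue measure on [0,1]^m. -/
/-!
Let `M = g a` be the maximum of `g` on the cube and `k = ⌊α⌋`. Along a segment `t ↦ g (a + t u)`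
issuing from `a` into the cube, Taylor's formula with Hölder remainder gives a polynomial `P` of
degree `k` with `|g (a + t u) - P t| ≤ L t^α`. At the `k + 1` nodes `t = i h`, where `h` is a fixed
multiple of `r = (M / L)^{1/α}`, this gives `|P| ≲ M`; inverting the Vandermonde matrix of the
nodes bounds the coefficients of `P (h ·)`, so `P` moves by at most `M / 4` on `[0, ε h]`, and
`g ≥ M / 2` there. Hence `g ≥ M / 2` on a box of side `≍ r` with vertex `a` inside the cube, so
`∫ g ≳ M r^m = M^{(m+α)/α} L^{-m/α}`, which rearranges to the claim.
-/

open MeasureTheory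

/-- The unit cube `[0,1]^m` in Euclidean space `ℝ^m`. -/
def euclideanUnitCube (m : ℕ) : Set (EuclideanSpace ℝ (Fin m)) :=
  {a | ∀ i, a i ∈ Set.Icc (0 : ℝ) 1}

/-- `g` is `α`-smooth with constant `L` on `D`: writing `α = ⌊α⌋ + {α}` with `⌊α⌋`
the largest integer strictly smaller than `α` (i.e. `⌈α⌉₊ - 1` for `α > 0`) and
`{α} ∈ (0,1]`, `g` is `⌊α⌋` times continuously differentiable on `D`, all iterated
Fréchet derivatives of order `j ≤ ⌊α⌋` have operator norm at most `L` on `D`, and the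
`⌊α⌋`-th iterated derivative is `{α}`-Hölder continuous on `D` with constant `L`
(w.r.t. the Euclidean norm). -/
def AlphaSmoothOn {m : ℕ} (α L : ℝ) (D : Set (EuclideanSpace ℝ (Fin m)))
    (g : EuclideanSpace ℝ (Fin m) → ℝ) : Prop :=
  ContDiffOn ℝ (⌈α⌉₊ - 1 : ℕ) g D ∧
  (∀ j : ℕ, j ≤ ⌈α⌉₊ - 1 → ∀ a ∈ D, ‖iteratedFDerivWithin ℝ j g D a‖ ≤ L) ∧
  ∀ a ∈ D, ∀ a' ∈ D,
    ‖iteratedFDerivWithin ℝ (⌈α⌉₊ - 1) g D a - iteratedFDerivWithin ℝ (⌈α⌉₊ - 1) g D a'‖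
      ≤ L * ‖a - a'‖ ^ (α - ((⌈α⌉₊ - 1 : ℕ) : ℝ))

open Set

section OneDimensional

open Finset Matrix

theorem abs_sub_taylorWithinEval_le_of_holder {b L μ : ℝ} (hb : 0 < b) (hL : 0 ≤ L)
    (hμ : 0 ≤ μ) :
    ∀ (k : ℕ) (f : ℝ → ℝ), ContDiffOn ℝ k f (Icc 0 b) →
      (∀ x ∈ Icc 0 b, ∀ y ∈ Icc 0 b,
        |iteratedDerivWithin k f (Icc 0 b) x - iteratedDerivWithin k f (Icc 0 b) y|
          ≤ L * |x - y| ^ μ) →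
      ∀ t ∈ Icc 0 b, |f t - taylorWithinEval f k (Icc 0 b) 0 t| ≤ L * t ^ (k + μ)
  | 0, f, _, hHol, t, ht => by
    simpa [abs_of_nonneg ht.1] using hHol t ht 0 (left_mem_Icc.2 hb.le)
  | k + 1, f, hf, hHol, t, ht => by
    set f' := derivWithin f (Icc 0 b)
    have hf' : ContDiffOn ℝ k f' (Icc 0 b) := hf.derivWithin (uniqueDiffOn_Icc hb) le_rfl
    have ih := abs_sub_taylorWithinEval_le_of_holder hb hL hμ k f' hf'
      (by simpa only [iteratedDerivWithin_succ'] using hHol)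
    have hderiv : ∀ x ∈ Icc 0 t, HasDerivWithinAt
        (fun x => f x - taylorWithinEval f (k + 1) (Icc 0 b) 0 x)
        (f' x - taylorWithinEval f' k (Icc 0 b) 0 x) (Icc 0 t) x := fun x hx =>
      ((hf.differentiableOn (by simp) x ⟨hx.1, hx.2.trans ht.2⟩).hasDerivWithinAt.mono
        (Icc_subset_Icc le_rfl ht.2)).sub (hasDerivAt_taylorWithinEval_succ f k).hasDerivWithinAt
    have hbound : ∀ x ∈ Ico 0 t, ‖f' x - taylorWithinEval f' k (Icc 0 b) 0 x‖
        ≤ L * t ^ (k + μ) := fun x hx =>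
      (ih x ⟨hx.1, hx.2.le.trans ht.2⟩).trans <| mul_le_mul_of_nonneg_left
        (Real.rpow_le_rpow hx.1 hx.2.le (by positivity)) hL
    have := norm_image_sub_le_of_norm_deriv_le_segment' hderiv hbound t (right_mem_Icc.2 ht.1)
    rw [taylorWithinEval_self, sub_self, sub_zero, sub_zero, Real.norm_eq_abs] at this
    rw [Nat.cast_succ, add_right_comm, Real.rpow_add_one' ht.1 (by positivity), ← mul_assoc]
    exact this

theorem exists_abs_sub_sum_le_of_holder {b L μ : ℝ} (hb : 0 < b) (hL : 0 ≤ L) (hμ : 0 ≤ μ)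
    {k : ℕ} {f : ℝ → ℝ} (hf : ContDiffOn ℝ k f (Icc 0 b))
    (hHol : ∀ x ∈ Icc 0 b, ∀ y ∈ Icc 0 b,
      |iteratedDerivWithin k f (Icc 0 b) x - iteratedDerivWithin k f (Icc 0 b) y|
        ≤ L * |x - y| ^ μ) :
    ∃ c : ℕ → ℝ, ∀ t ∈ Icc 0 b,
      |f t - ∑ j ∈ range (k + 1), c j * t ^ j| ≤ L * t ^ (k + μ) := by
  refine ⟨fun j => (j.factorial : ℝ)⁻¹ * iteratedDerivWithin j f (Icc 0 b) 0, fun t ht => ?_⟩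
  convert abs_sub_taylorWithinEval_le_of_holder hb hL hμ k f hf hHol t ht using 4
  rw [taylor_within_apply]
  exact sum_congr rfl fun j _ => by rw [smul_eq_mul, sub_zero]; ring

theorem Matrix.exists_norm_le_mul_norm_mulVec {n : Type*} [Fintype n] [DecidableEq n]
    (A : Matrix n n ℝ) (hA : IsUnit A.det) :
    ∃ K : ℝ, 0 ≤ K ∧ ∀ d : n → ℝ, ‖d‖ ≤ K * ‖A *ᵥ d‖ := by
  let _ : NormedAddCommGroup (Matrix n n ℝ) := Matrix.linftyOpNormedAddCommGroup
  refine ⟨‖A⁻¹‖, norm_nonneg _, fun d => ?_⟩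
  calc ‖d‖ = ‖A⁻¹ *ᵥ (A *ᵥ d)‖ := by rw [mulVec_mulVec, nonsing_inv_mul _ hA, one_mulVec]
    _ ≤ ‖A⁻¹‖ * ‖A *ᵥ d‖ := linfty_opNorm_mulVec _ _

theorem exists_abs_sum_sub_coeff_zero_le_of_abs_le_at_nodes (k : ℕ) :
    ∃ A : ℝ, 0 ≤ A ∧ ∀ (c : ℕ → ℝ) (h B s : ℝ), 0 < h →
      (∀ i ≤ k, |∑ j ∈ range (k + 1), c j * (i * h) ^ j| ≤ B) → 0 ≤ s → s ≤ h →
      |∑ j ∈ range (k + 1), c j * s ^ j - c 0| ≤ A * B * (s / h) := by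
  have hnodes : Function.Injective fun i : Fin (k + 1) => ((i : ℕ) : ℝ) :=
    fun i j hij => Fin.ext (Nat.cast_injective hij)
  obtain ⟨K, hK0, hK⟩ := exists_norm_le_mul_norm_mulVec _
    (det_vandermonde_ne_zero_iff.2 hnodes).isUnit
  refine ⟨k * K, by positivity, fun c h B s hh hB hs hsh => ?_⟩
  have hB0 : 0 ≤ B := (abs_nonneg _).trans (hB 0 (Nat.zero_le k))
  set d : Fin (k + 1) → ℝ := fun j => c j * h ^ (j : ℕ)
  have hVd : ‖vandermonde (fun i : Fin (k + 1) => ((i : ℕ) : ℝ)) *ᵥ d‖ ≤ B := by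
    refine (pi_norm_le_iff_of_nonneg hB0).2 fun i => ?_
    convert hB i (Nat.le_of_lt_succ i.2) using 2
    simp only [mulVec, dotProduct, vandermonde_apply, d, Real.norm_eq_abs]
    rw [Fin.sum_univ_eq_sum_range (fun j => ((i : ℕ) : ℝ) ^ j * (c j * h ^ j))]
    exact congrArg _ (sum_congr rfl fun j _ => by ring)
  have hcoeff : ∀ j ≤ k, |c j * h ^ j| ≤ K * B := fun j hj =>
    calc |c j * h ^ j| = ‖d ⟨j, Nat.lt_succ_of_le hj⟩‖ := rfl
      _ ≤ ‖d‖ := norm_le_pi_norm d _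
      _ ≤ K * B := (hK d).trans (mul_le_mul_of_nonneg_left hVd hK0)
  have hsh0 : 0 ≤ s / h := div_nonneg hs hh.le
  have hsh1 : s / h ≤ 1 := (div_le_one hh).2 hsh
  rw [sum_range_succ', pow_zero, mul_one, add_sub_cancel_right]
  calc |∑ j ∈ range k, c (j + 1) * s ^ (j + 1)|
      ≤ ∑ j ∈ range k, |c (j + 1) * h ^ (j + 1)| * (s / h) ^ (j + 1) := by
        refine (abs_sum_le_sum_abs _ _).trans_eq (sum_congr rfl fun j _ => ?_)
        rw [← abs_of_nonneg (pow_nonneg hsh0 (j + 1)), ← abs_mul, mul_assoc, ← mul_pow,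
          mul_div_cancel₀ _ hh.ne']
    _ ≤ ∑ _j ∈ range k, K * B * (s / h) := by
        refine sum_le_sum fun j hj => mul_le_mul (hcoeff _ (mem_range.1 hj)) ?_
          (by positivity) (by positivity)
        exact pow_le_of_le_one hsh0 hsh1 j.succ_ne_zero
    _ = k * K * B * (s / h) := by rw [sum_const, card_range, nsmul_eq_mul]; ring

theorem exists_abs_sum_sub_coeff_zero_le_of_approx (k : ℕ) {α : ℝ} (hα : 0 ≤ α) :
    ∃ A : ℝ, 0 ≤ A ∧ ∀ (φ : ℝ → ℝ) (c : ℕ → ℝ) (L M h : ℝ), 0 ≤ L → 0 < h → L * h ^ α ≤ M →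
      (∀ t ∈ Icc 0 (k * h), |φ t| ≤ M) →
      (∀ t ∈ Icc 0 (k * h), |φ t - ∑ j ∈ range (k + 1), c j * t ^ j| ≤ L * t ^ α) →
      ∀ s, 0 ≤ s → s ≤ h → |∑ j ∈ range (k + 1), c j * s ^ j - c 0| ≤ A * M * (s / h) := by
  obtain ⟨A, hA0, hA⟩ := exists_abs_sum_sub_coeff_zero_le_of_abs_le_at_nodes k
  refine ⟨A * (1 + (k : ℝ) ^ α), by positivity, fun φ c L M h hL hh hLh hφ hP s hs hsh => ?_⟩
  have hnodes : ∀ i ≤ k, |∑ j ∈ range (k + 1), c j * (i * h) ^ j| ≤ (1 + (k : ℝ) ^ α) * M := by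
    intro i hi
    have hik : (i : ℝ) * h ≤ k * h := mul_le_mul_of_nonneg_right (by exact_mod_cast hi) hh.le
    have hrem : L * ((i : ℝ) * h) ^ α ≤ (k : ℝ) ^ α * M :=
      calc L * ((i : ℝ) * h) ^ α ≤ L * ((k : ℝ) * h) ^ α := by gcongr
        _ = (k : ℝ) ^ α * (L * h ^ α) := by rw [Real.mul_rpow (by positivity) hh.le]; ring
        _ ≤ (k : ℝ) ^ α * M := by gcongr
    have hih : (i : ℝ) * h ∈ Icc 0 (k * h) := ⟨by positivity, hik⟩
    have := abs_sub_abs_le_abs_sub (∑ j ∈ range (k + 1), c j * (i * h) ^ j) (φ (i * h))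
    rw [abs_sub_comm] at this
    linarith [hP _ hih, hφ _ hih]
  calc _ ≤ A * ((1 + (k : ℝ) ^ α) * M) * (s / h) := hA c h _ s hh hnodes hs hsh
    _ = _ := by ring

theorem exists_half_le_of_abs_sub_sum_le (k : ℕ) {α : ℝ} (hα : 0 < α) :
    ∃ ε : ℝ, 0 < ε ∧ ε ≤ 1 ∧ ∀ (φ : ℝ → ℝ) (c : ℕ → ℝ) (b L h : ℝ), 0 ≤ L → 0 < h →
      (k + 1) * h ≤ b → (∀ t ∈ Icc 0 b, |φ t| ≤ φ 0) →
      (∀ t ∈ Icc 0 b, |φ t - ∑ j ∈ range (k + 1), c j * t ^ j| ≤ L * t ^ α) →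
      L * h ^ α ≤ φ 0 → ∀ s, 0 ≤ s → s ≤ ε * h → φ 0 / 2 ≤ φ s := by
  obtain ⟨A, hA0, hA⟩ := exists_abs_sum_sub_coeff_zero_le_of_approx k hα.le
  -- `ε` makes both the drift `A M ε` of the polynomial and the remainder `L (ε h)^α` at most `M/4`.
  set ε := min (4 * (A + 1))⁻¹ ((1 / 4 : ℝ) ^ α⁻¹)
  have hε : 0 < ε := lt_min (by positivity) (by positivity)
  have hε1 : ε ≤ 1 := (min_le_left _ _).trans (inv_le_one_of_one_le₀ (by linarith))
  have hεA : A * ε ≤ 1 / 4 :=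
    calc A * ε ≤ A * (4 * (A + 1))⁻¹ := mul_le_mul_of_nonneg_left (min_le_left _ _) hA0
      _ ≤ 1 / 4 := by rw [mul_inv_le_iff₀ (by positivity)]; linarith
  have hεα : ε ^ α ≤ 1 / 4 :=
    calc ε ^ α ≤ ((1 / 4 : ℝ) ^ α⁻¹) ^ α := Real.rpow_le_rpow hε.le (min_le_right _ _) hα.le
      _ = 1 / 4 := Real.rpow_inv_rpow (by norm_num) hα.ne'
  refine ⟨ε, hε, hε1, fun φ c b L h hL hh hkh hmax hP hLh s hs hsε => ?_⟩
  have hkb : k * h ≤ b := by linarith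
  have hhb : h ≤ b := by linarith [mul_nonneg (Nat.cast_nonneg k) hh.le]
  have hsh : s ≤ h := hsε.trans (mul_le_of_le_one_left hh.le hε1)
  have h0 : (0 : ℝ) ∈ Icc 0 b := left_mem_Icc.2 (hh.le.trans hhb)
  set M := φ 0
  have hM : 0 ≤ M := (abs_nonneg _).trans (hmax 0 h0)
  have hpoly : |∑ j ∈ range (k + 1), c j * s ^ j - M| ≤ M / 4 := by
    have hc0 : c 0 = M := by
      have := hP 0 h0
      simp only [sum_range_succ', ne_eq, Nat.add_one_ne_zero, not_false_eq_true, zero_pow,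
        mul_zero, sum_const_zero, pow_zero, mul_one, zero_add, Real.zero_rpow hα.ne',
        abs_nonpos_iff, sub_eq_zero] at this
      exact this.symm
    have hsub : Icc 0 (k * h) ⊆ Icc 0 b := Icc_subset_Icc le_rfl hkb
    calc _ ≤ A * M * (s / h) := hc0 ▸ hA φ c L M h hL hh hLh (fun t ht => hmax t (hsub ht))
          (fun t ht => hP t (hsub ht)) s hs hsh
      _ ≤ A * M * ε := by gcongr; exact (div_le_iff₀ hh).2 hsε
      _ ≤ M / 4 := by nlinarith
  have hrem : L * s ^ α ≤ M / 4 :=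
    calc L * s ^ α ≤ L * (ε * h) ^ α := by gcongr
      _ = ε ^ α * (L * h ^ α) := by rw [Real.mul_rpow hε.le hh.le]; ring
      _ ≤ 1 / 4 * M := mul_le_mul hεα hLh (by positivity) (by norm_num)
      _ = M / 4 := by ring
  have := hP s ⟨hs, hsh.trans hhb⟩
  rw [abs_le] at this hpoly
  linarith [this.1, hpoly.1]

theorem exists_half_le_of_holder_iteratedDerivWithin (k : ℕ) (α : ℝ) (hkα : (k : ℝ) < α) :
    ∃ ε : ℝ, 0 < ε ∧ ε ≤ 1 ∧ ∀ (φ : ℝ → ℝ) (b L h : ℝ), 0 ≤ L → 0 < h → (k + 1) * h ≤ b →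
      ContDiffOn ℝ k φ (Icc 0 b) →
      (∀ x ∈ Icc 0 b, ∀ y ∈ Icc 0 b,
        |iteratedDerivWithin k φ (Icc 0 b) x - iteratedDerivWithin k φ (Icc 0 b) y|
          ≤ L * |x - y| ^ (α - k)) →
      (∀ t ∈ Icc 0 b, |φ t| ≤ φ 0) → L * h ^ α ≤ φ 0 →
      ∀ s, 0 ≤ s → s ≤ ε * h → φ 0 / 2 ≤ φ s := by
  obtain ⟨ε, hε, hε1, hhalf⟩ :=
    exists_half_le_of_abs_sub_sum_le k ((Nat.cast_nonneg k).trans_lt hkα)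
  refine ⟨ε, hε, hε1, fun φ b L h hL hh hkh hφ hHol hmax hLh => ?_⟩
  have hb : 0 < b := lt_of_lt_of_le (by positivity) hkh
  obtain ⟨c, hc⟩ := exists_abs_sub_sum_le_of_holder hb hL (sub_nonneg.2 hkα.le) hφ hHol
  rw [add_sub_cancel] at hc
  exact hhalf φ c b L h hL hh hkh hmax hc hLh

end OneDimensional

section Line

variable {E : Type*} [NormedAddCommGroup E] [NormedSpace ℝ E] {D : Set E} {g : E → ℝ}
  {a u : E} {b : ℝ}

theorem iteratedDerivWithin_comp_add_smul (hD : UniqueDiffOn ℝ D) (hb : 0 < b)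
    (hmaps : ∀ t ∈ Icc 0 b, a + t • u ∈ D) :
    ∀ {k : ℕ}, ContDiffOn ℝ k g D → ∀ t ∈ Icc 0 b,
      iteratedDerivWithin k (fun s => g (a + s • u)) (Icc 0 b) t
        = iteratedFDerivWithin ℝ k g D (a + t • u) (fun _ => u)
  | 0, _, t, _ => by simp
  | k + 1, hg, t, ht => by
    have ih : EqOn (iteratedDerivWithin k (fun s => g (a + s • u)) (Icc 0 b))
        (fun s => iteratedFDerivWithin ℝ k g D (a + s • u) (fun _ => u)) (Icc 0 b) :=
      fun s hs => iteratedDerivWithin_comp_add_smul hD hb hmaps (hg.of_le (by norm_cast; omega))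
        s hs
    have hline : HasDerivWithinAt (fun s : ℝ => a + s • u) u (Icc 0 b) t := by
      simpa using (((hasDerivAt_id t).smul_const u).const_add a).hasDerivWithinAt
    have hiter : HasDerivWithinAt (fun s => iteratedFDerivWithin ℝ k g D (a + s • u))
        (fderivWithin ℝ (iteratedFDerivWithin ℝ k g D) D (a + t • u) u) (Icc 0 b) t :=
      ((hg.differentiableOn_iteratedFDerivWithin (by norm_cast; omega) hD) _
        (hmaps t ht)).hasFDerivWithinAt.comp_hasDerivWithinAt t hline hmaps
    have happly := (ContinuousMultilinearMap.apply ℝ (fun _ : Fin k => E) ℝ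
      (fun _ => u)).hasFDerivAt.comp_hasDerivWithinAt t hiter
    rw [iteratedDerivWithin_succ, derivWithin_congr ih (ih ht),
      iteratedFDerivWithin_succ_apply_left]
    exact happly.derivWithin (uniqueDiffOn_Icc hb t ht)

theorem abs_iteratedDerivWithin_comp_add_smul_sub_le (hD : UniqueDiffOn ℝ D) (hb : 0 < b)
    (hmaps : ∀ t ∈ Icc 0 b, a + t • u ∈ D) (hu : ‖u‖ = 1) {k : ℕ} (hg : ContDiffOn ℝ k g D)
    {L μ : ℝ} (hHol : ∀ x ∈ D, ∀ y ∈ D,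
      ‖iteratedFDerivWithin ℝ k g D x - iteratedFDerivWithin ℝ k g D y‖ ≤ L * ‖x - y‖ ^ μ) :
    ∀ x ∈ Icc 0 b, ∀ y ∈ Icc 0 b,
      |iteratedDerivWithin k (fun s => g (a + s • u)) (Icc 0 b) x
        - iteratedDerivWithin k (fun s => g (a + s • u)) (Icc 0 b) y| ≤ L * |x - y| ^ μ := by
  intro x hx y hy
  rw [iteratedDerivWithin_comp_add_smul hD hb hmaps hg x hx,
    iteratedDerivWithin_comp_add_smul hD hb hmaps hg y hy, ← sub_apply,
    ← Real.norm_eq_abs]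
  calc _ ≤ ‖iteratedFDerivWithin ℝ k g D (a + x • u)
          - iteratedFDerivWithin ℝ k g D (a + y • u)‖ * ∏ _i : Fin k, ‖u‖ :=
        ContinuousMultilinearMap.le_opNorm _ _
    _ ≤ L * ‖(a + x • u) - (a + y • u)‖ ^ μ := by
        simpa [hu] using hHol _ (hmaps x hx) _ (hmaps y hy)
    _ = L * |x - y| ^ μ := by
        rw [add_sub_add_left_eq_sub, ← sub_smul, norm_smul, hu, mul_one, Real.norm_eq_abs]

end Line

open Finset in
theorem EuclideanSpace.norm_le_sqrt_card_mul {ι : Type*} [Fintype ι] {x : EuclideanSpace ℝ ι}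
    {r : ℝ} (hr : 0 ≤ r) (hx : ∀ i, |x i| ≤ r) : ‖x‖ ≤ √(Fintype.card ι) * r := by
  rw [EuclideanSpace.norm_eq, ← Real.sqrt_sq hr, ← Real.sqrt_mul (Nat.cast_nonneg _)]
  refine Real.sqrt_le_sqrt ?_
  calc ∑ i, ‖x i‖ ^ 2 ≤ ∑ _i : ι, r ^ 2 :=
        sum_le_sum fun i _ => by
          rw [Real.norm_eq_abs]; exact pow_le_pow_left₀ (abs_nonneg _) (hx i) 2
    _ = Fintype.card ι * r ^ 2 := by rw [sum_const, card_univ, nsmul_eq_mul]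

section Cube

variable {m : ℕ}

theorem euclideanUnitCube_eq_preimage (m : ℕ) :
    euclideanUnitCube m = EuclideanSpace.equiv (Fin m) ℝ ⁻¹' univ.pi fun _ => Icc 0 1 := by
  ext x
  simp only [euclideanUnitCube, mem_ofPred_eq, mem_preimage, mem_univ_pi]
  rfl

theorem isCompact_euclideanUnitCube (m : ℕ) : IsCompact (euclideanUnitCube m) := by
  rw [euclideanUnitCube_eq_preimage]
  exact (EuclideanSpace.equiv (Fin m) ℝ).toHomeomorph.isCompact_preimage.2
    (isCompact_univ_pi fun _ => isCompact_Icc)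

theorem uniqueDiffOn_euclideanUnitCube (m : ℕ) : UniqueDiffOn ℝ (euclideanUnitCube m) := by
  rw [euclideanUnitCube_eq_preimage, ContinuousLinearEquiv.uniqueDiffOn_preimage_iff]
  exact UniqueDiffOn.univ_pi fun _ => uniqueDiffOn_Icc zero_lt_one

def inwardBox (a : EuclideanSpace ℝ (Fin m)) (ρ : ℝ) : Set (EuclideanSpace ℝ (Fin m)) :=
  {x | ∀ i, x i ∈ if a i ≤ 1 / 2 then Icc (a i) (a i + ρ) else Icc (a i - ρ) (a i)}

variable {a x : EuclideanSpace ℝ (Fin m)} {ρ : ℝ}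

theorem inwardBox_eq_preimage (a : EuclideanSpace ℝ (Fin m)) (ρ : ℝ) :
    inwardBox a ρ = WithLp.ofLp ⁻¹'
      univ.pi fun i => if a i ≤ 1 / 2 then Icc (a i) (a i + ρ) else Icc (a i - ρ) (a i) := by
  ext x
  simp [inwardBox]

theorem measurableSet_inwardBox (a : EuclideanSpace ℝ (Fin m)) (ρ : ℝ) :
    MeasurableSet (inwardBox a ρ) := by
  rw [inwardBox_eq_preimage]
  exact (MeasurableSet.univ_pi fun i => by split_ifs <;> exact measurableSet_Icc).preimage
    (PiLp.volume_preserving_ofLp (Fin m)).measurable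

open Finset in
theorem volume_inwardBox (a : EuclideanSpace ℝ (Fin m)) (ρ : ℝ) :
    volume (inwardBox a ρ) = ENNReal.ofReal ρ ^ m := by
  rw [inwardBox_eq_preimage, (PiLp.volume_preserving_ofLp (Fin m)).measure_preimage
    (MeasurableSet.univ_pi fun i => by split_ifs <;> exact measurableSet_Icc).nullMeasurableSet,
    volume_pi_pi]
  simp only [apply_ite volume, Real.volume_Icc, add_sub_cancel_left, sub_sub_cancel, ite_self,
    prod_const, card_univ, Fintype.card_fin]

theorem abs_sub_le_of_mem_inwardBox (hx : x ∈ inwardBox a ρ) (i : Fin m) : |x i - a i| ≤ ρ := by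
  have hxi := hx i
  split_ifs at hxi <;> exact abs_le.2 ⟨by linarith [hxi.1, hxi.2], by linarith [hxi.1, hxi.2]⟩

theorem inwardBox_subset_euclideanUnitCube (ha : a ∈ euclideanUnitCube m) (hρ : ρ ≤ 1 / 2) :
    inwardBox a ρ ⊆ euclideanUnitCube m := by
  intro x hx i
  have hxi := hx i
  have hai := ha i
  split_ifs at hxi with h
  · exact ⟨hai.1.trans hxi.1, by linarith [hxi.2]⟩
  · exact ⟨by linarith [hxi.1], hxi.2.trans hai.2⟩

theorem add_smul_normalize_mem_euclideanUnitCube (ha : a ∈ euclideanUnitCube m)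
    (hx : x ∈ inwardBox a ρ) {t : ℝ} (ht : t ∈ Icc 0 (1 / 2)) :
    a + t • ‖x - a‖⁻¹ • (x - a) ∈ euclideanUnitCube m := by
  intro i
  change a i + t * (‖x - a‖⁻¹ * (x i - a i)) ∈ Icc 0 1
  have hw : |‖x - a‖⁻¹ * (x i - a i)| ≤ 1 := by
    rw [abs_mul, abs_inv, abs_norm]
    exact inv_mul_le_one_of_le₀ (by simpa using PiLp.norm_apply_le (x - a) i) (norm_nonneg _)
  have htw : |t * (‖x - a‖⁻¹ * (x i - a i))| ≤ 1 / 2 := by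
    rw [abs_mul, abs_of_nonneg ht.1]
    nlinarith [ht.2, abs_nonneg (‖x - a‖⁻¹ * (x i - a i))]
  have hxi := hx i
  have hai := ha i
  have hinv : 0 ≤ ‖x - a‖⁻¹ := inv_nonneg.2 (norm_nonneg _)
  rw [abs_le] at htw
  split_ifs at hxi with h
  · have : 0 ≤ t * (‖x - a‖⁻¹ * (x i - a i)) :=
      mul_nonneg ht.1 (mul_nonneg hinv (sub_nonneg.2 hxi.1))
    exact ⟨by linarith [hai.1], by linarith [htw.2]⟩
  · have : t * (‖x - a‖⁻¹ * (x i - a i)) ≤ 0 :=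
      mul_nonpos_of_nonneg_of_nonpos ht.1
        (mul_nonpos_of_nonneg_of_nonpos hinv (by linarith [hxi.2]))
    exact ⟨by linarith [htw.1], by linarith [hai.2]⟩

theorem mul_pow_le_setIntegral_euclideanUnitCube {g : EuclideanSpace ℝ (Fin m) → ℝ} {y : ℝ}
    (hg0 : ∀ x ∈ euclideanUnitCube m, 0 ≤ g x) (hg : IntegrableOn g (euclideanUnitCube m))
    (ha : a ∈ euclideanUnitCube m) (hρ0 : 0 ≤ ρ) (hρ : ρ ≤ 1 / 2)
    (hy : ∀ x ∈ inwardBox a ρ, y ≤ g x) : y * ρ ^ m ≤ ∫ x in euclideanUnitCube m, g x := by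
  have hsub := inwardBox_subset_euclideanUnitCube ha hρ
  calc y * ρ ^ m = (volume (inwardBox a ρ)).toReal * y := by
        rw [volume_inwardBox a ρ, ENNReal.toReal_pow, ENNReal.toReal_ofReal hρ0, mul_comm]
    _ ≤ ∫ x in inwardBox a ρ, g x :=
        setIntegral_ge_of_const_le (measurableSet_inwardBox a ρ)
          (by rw [volume_inwardBox a ρ]; exact ENNReal.pow_ne_top ENNReal.ofReal_ne_top) hy
          (hg.mono_set hsub)
    _ ≤ ∫ x in euclideanUnitCube m, g x :=
        setIntegral_mono_set hg
          ((ae_restrict_iff' (isCompact_euclideanUnitCube m).isClosed.measurableSet).2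
            (ae_of_all _ hg0)) hsub.eventuallyLE

end Cube

theorem natCeil_sub_one_lt {α : ℝ} (hα : 0 < α) : ((⌈α⌉₊ - 1 : ℕ) : ℝ) < α := by
  rw [Nat.cast_sub (Nat.one_le_iff_ne_zero.2 (Nat.ceil_pos.2 hα).ne'), Nat.cast_one]
  linarith [Nat.ceil_lt_add_one hα.le]

theorem AlphaSmoothOn.abs_le {m : ℕ} {α L : ℝ} {D : Set (EuclideanSpace ℝ (Fin m))}
    {g : EuclideanSpace ℝ (Fin m) → ℝ} (hg : AlphaSmoothOn α L D g) {a : EuclideanSpace ℝ (Fin m)}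
    (ha : a ∈ D) : |g a| ≤ L := by
  simpa using hg.2.1 0 (Nat.zero_le _) a ha

theorem exists_half_le_on_inwardBox (m : ℕ) (hm : 1 ≤ m) (α : ℝ) (hα : 0 < α) :
    ∃ c : ℝ, 0 < c ∧ c ≤ 1 / 2 ∧ ∀ (L r : ℝ) (g : EuclideanSpace ℝ (Fin m) → ℝ)
      (a : EuclideanSpace ℝ (Fin m)), AlphaSmoothOn α L (euclideanUnitCube m) g →
      (∀ x ∈ euclideanUnitCube m, 0 ≤ g x) → a ∈ euclideanUnitCube m →
      IsMaxOn g (euclideanUnitCube m) a → 0 < r → r ≤ 1 → L * r ^ α ≤ g a →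
      ∀ x ∈ inwardBox a (c * r), g a / 2 ≤ g x := by
  set k := ⌈α⌉₊ - 1
  obtain ⟨ε, hε, hε1, hhalf⟩ :=
    exists_half_le_of_holder_iteratedDerivWithin k α (natCeil_sub_one_lt hα)
  have hm' : 1 ≤ √(m : ℝ) := Real.one_le_sqrt.2 (by exact_mod_cast hm)
  refine ⟨ε / (2 * (k + 1) * √m), by positivity, ?_, ?_⟩
  · rw [div_le_iff₀ (by positivity)]
    nlinarith [(Nat.cast_nonneg k : (0 : ℝ) ≤ k)]
  intro L r g a hg hg0 ha hmax hr0 hr1 hLr x hx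
  have hL : 0 ≤ L := (abs_nonneg _).trans (hg.abs_le ha)
  obtain ⟨hgC, -, hgH⟩ := hg
  -- The nodes `i h`, `i ≤ k`, of the one-dimensional argument must fit into the segments of
  -- length `1/2` that start at `a` and stay in the cube.
  set h := r / (2 * (k + 1))
  have hkh : (k + 1) * h ≤ 1 / 2 := by
    rw [show (k + 1) * h = r / 2 by simp only [h]; field_simp]
    linarith
  have hLh : L * h ^ α ≤ g a :=
    le_trans (by gcongr; exact div_le_self hr0.le (by linarith)) hLr
  have hdist : ‖x - a‖ ≤ ε * h :=
    calc ‖x - a‖ ≤ √m * (ε / (2 * (k + 1) * √m) * r) := by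
          simpa using EuclideanSpace.norm_le_sqrt_card_mul (by positivity)
            fun i => abs_sub_le_of_mem_inwardBox hx i
      _ = ε * h := by simp only [h]; field_simp
  rcases eq_or_ne x a with rfl | hxa
  · linarith [hg0 x ha]
  set u := ‖x - a‖⁻¹ • (x - a)
  have hmaps : ∀ t ∈ Icc (0 : ℝ) (1 / 2), a + t • u ∈ euclideanUnitCube m :=
    fun t ht => add_smul_normalize_mem_euclideanUnitCube ha hx ht
  have hφ : ContDiffOn ℝ k (fun t : ℝ => g (a + t • u)) (Icc 0 (1 / 2)) :=
    hgC.comp (contDiff_const.add (contDiff_id.smul contDiff_const)).contDiffOn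
      fun t ht => hmaps t ht
  have hφ_le : ∀ t ∈ Icc (0 : ℝ) (1 / 2), |g (a + t • u)| ≤ g (a + (0 : ℝ) • u) := by
    intro t ht
    rw [zero_smul, add_zero, abs_of_nonneg (hg0 _ (hmaps t ht))]
    exact hmax (hmaps t ht)
  have := hhalf (fun t : ℝ => g (a + t • u)) (1 / 2) L h hL (by positivity) hkh hφ
    (abs_iteratedDerivWithin_comp_add_smul_sub_le (uniqueDiffOn_euclideanUnitCube m)
      (by norm_num) hmaps (norm_smul_inv_norm (sub_ne_zero.2 hxa)) hgC hgH) hφ_le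
    (by rwa [zero_smul, add_zero]) _ (norm_nonneg _) hdist
  simpa [u, smul_smul, mul_inv_cancel₀ (norm_ne_zero_iff.2 (sub_ne_zero.2 hxa))] using this

theorem le_mul_rpow_mul_rpow_of_mul_mul_div_rpow_le {K M L I d α : ℝ} (hK : 0 < K) (hM : 0 ≤ M)
    (hL : 0 < L) (hd : 0 ≤ d) (hα : 0 < α) (h : K * M * (M / L) ^ (d / α) ≤ I) :
    M ≤ K ^ (-(α / (d + α))) * L ^ (d / (d + α)) * I ^ (α / (d + α)) := by
  have hdα : 0 < d + α := by linarith
  have hI : 0 ≤ I := le_trans (by positivity) h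
  have hpow : M ^ ((d + α) / α) = M * (M / L) ^ (d / α) * L ^ (d / α) := by
    rw [Real.div_rpow hM hL.le, add_div, div_self hα.ne', Real.rpow_add' hM (by positivity),
      Real.rpow_one, mul_assoc, div_mul_cancel₀ _ (Real.rpow_pos_of_pos hL _).ne']
    ring
  have hK' : M * (M / L) ^ (d / α) ≤ I / K := by
    rw [le_div_iff₀ hK]
    linarith
  calc M = (M ^ ((d + α) / α)) ^ (α / (d + α)) := by
        rw [← Real.rpow_mul hM, show (d + α) / α * (α / (d + α)) = 1 by field_simp, Real.rpow_one]
    _ ≤ (I / K * L ^ (d / α)) ^ (α / (d + α)) := by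
        rw [hpow]
        exact Real.rpow_le_rpow (by positivity)
          (mul_le_mul_of_nonneg_right hK' (by positivity)) (by positivity)
    _ = K ^ (-(α / (d + α))) * L ^ (d / (d + α)) * I ^ (α / (d + α)) := by
        rw [Real.mul_rpow (by positivity) (by positivity), Real.div_rpow hI hK.le,
          ← Real.rpow_mul hL.le, Real.rpow_neg hK.le,
          show d / α * (α / (d + α)) = d / (d + α) by field_simp]
        ring

/-- **Uniform bound on nonnegative `α`-smooth functions (proof of Theorem 1).**
There is a constant `C > 0` depending only on `m` and `α` such that every
nonnegative `α`-smooth function `g` on `[0,1]^m` with constant `L` satisfies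
`sup g ≤ C ⬝ L^{m/(m+α)} ⬝ (∫ g)^{α/(m+α)}`. -/
theorem sup_le_of_alphaSmooth (m : ℕ) (hm : 1 ≤ m) (α : ℝ) (hα : 0 < α) :
    ∃ C : ℝ, 0 < C ∧
      ∀ (L : ℝ), 0 ≤ L →
        ∀ g : EuclideanSpace ℝ (Fin m) → ℝ,
          (∀ a ∈ euclideanUnitCube m, 0 ≤ g a) →
          AlphaSmoothOn α L (euclideanUnitCube m) g →
          ∀ a ∈ euclideanUnitCube m,
            g a ≤ C * L ^ ((m : ℝ) / (m + α)) *
              (∫ x in euclideanUnitCube m, g x) ^ (α / (m + α)) := by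
  obtain ⟨c, hc, hc2, hplateau⟩ := exists_half_le_on_inwardBox m hm α hα
  refine ⟨(c ^ m / 2) ^ (-(α / (m + α))), by positivity, fun L _ g hg0 hg a ha => ?_⟩
  have hcube := isCompact_euclideanUnitCube m
  obtain ⟨a₀, ha₀, hmax⟩ := hcube.exists_isMaxOn ⟨a, ha⟩ hg.1.continuousOn
  rcases (hg0 a₀ ha₀).eq_or_lt with hM | hM
  · have hI : 0 ≤ ∫ x in euclideanUnitCube m, g x :=
      setIntegral_nonneg hcube.isClosed.measurableSet hg0
    calc g a ≤ g a₀ := hmax ha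
      _ = 0 := hM.symm
      _ ≤ _ := by positivity
  have hML : g a₀ ≤ L := (le_abs_self _).trans (hg.abs_le ha₀)
  have hL : 0 < L := hM.trans_le hML
  set r := (g a₀ / L) ^ α⁻¹
  have hr1 : r ≤ 1 := Real.rpow_le_one (by positivity) ((div_le_one hL).2 hML) (by positivity)
  have hLr : L * r ^ α = g a₀ := by
    rw [Real.rpow_inv_rpow (by positivity) hα.ne', mul_div_cancel₀ _ hL.ne']
  have hI := mul_pow_le_setIntegral_euclideanUnitCube hg0
    (hg.1.continuousOn.integrableOn_compact hcube) ha₀ (by positivity)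
    ((mul_le_of_le_one_right hc.le hr1).trans hc2)
    (hplateau L r g a₀ hg hg0 ha₀ hmax (by positivity) hr1 hLr.le)
  refine (hmax ha).trans (le_mul_rpow_mul_rpow_of_mul_mul_div_rpow_le (by positivity) hM.le
    hL (Nat.cast_nonneg m) hα (le_of_eq_of_le ?_ hI))
  rw [mul_pow, ← Real.rpow_natCast r, ← Real.rpow_mul (by positivity)]
  ring_nf
end

section
/- Let d ≥ 1 be an integer, β ∈ (0, 1], and T ≥ 1 an integer. Let M_1, …, M_T be real symmetric positive semidefinite d × d matrices, each with trace(M_t) ≤ 1. Define Σ_0 = I_d (the d × d identity) and Σ_t = Σ_{t−1} + M_t for t = 1, …, T (so each Σ_t is positive definite, hence invertible). If trace(M_t Σ_{t−1}^{−1}) ≥ β/2 for every t ∈ {1, …, T}, then T ≤ (8d/β) · log(1 + 8/β). -/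
/-!
With `Σ_t = I + M_1 + ⋯ + M_t`, the determinant lemma gives
`det Σ_t = det Σ_{t-1} · det (I + Σ_{t-1}⁻¹ M_t) ≥ det Σ_{t-1} · (1 + tr (M_t Σ_{t-1}⁻¹))`,
so every step raises `log det Σ_t` by at least `log (1 + β/2) ≥ β/4`, and `log det Σ_T ≥ Tβ/4`.
On the other hand `log λ ≤ log c + λ/c - 1` for every eigenvalue `λ` of `Σ_T` and every `c > 0`;
summing, with `tr Σ_T ≤ d + T` and `c ≥ 1`, gives `log det Σ_T ≤ d log c + T/c`. Taking `c = 1 + 8/β` gives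
`Tβ/4 ≤ d log (1 + 8/β) + Tβ/8`.
-/

open Matrix Finset

theorem Finset.one_add_sum_le_prod_one_add {ι R : Type*} [CommSemiring R] [PartialOrder R]
    [IsOrderedRing R] (s : Finset ι) {f : ι → R} (hf : ∀ i ∈ s, 0 ≤ f i) :
    1 + ∑ i ∈ s, f i ≤ ∏ i ∈ s, (1 + f i) := by
  classical
  induction s using Finset.induction with
  | empty => simp
  | insert a s ha ih =>
    rw [sum_insert ha, prod_insert ha]
    have ha0 : 0 ≤ f a := hf a (mem_insert_self a s)
    have hs0 : 0 ≤ ∑ i ∈ s, f i := sum_nonneg fun i hi => hf i (mem_insert_of_mem hi)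
    calc 1 + (f a + ∑ i ∈ s, f i) ≤ 1 + (f a + ∑ i ∈ s, f i) + f a * ∑ i ∈ s, f i :=
          le_add_of_nonneg_right (mul_nonneg ha0 hs0)
      _ = (1 + f a) * (1 + ∑ i ∈ s, f i) := by ring
      _ ≤ (1 + f a) * ∏ i ∈ s, (1 + f i) := by
          gcongr
          exacts [add_nonneg zero_le_one ha0, ih fun i hi => hf i (mem_insert_of_mem hi)]

variable {n : Type*} [DecidableEq n]

section Fintype

variable [Fintype n]

theorem Matrix.IsHermitian.det_one_add {B : Matrix n n ℝ} (hB : B.IsHermitian) :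
    (1 + B).det = ∏ i, (1 + hB.eigenvalues i) := by
  have h : 1 + B = cfc (fun x : ℝ => 1 + x) B := by
    rw [cfc_add .., cfc_const_one .., cfc_id' ..]
  rw [h, hB.cfc_eq]
  simp [IsHermitian.cfc, -Unitary.conjStarAlgAut_apply]

theorem Matrix.PosSemidef.one_add_trace_le_det_one_add {B : Matrix n n ℝ} (hB : B.PosSemidef) :
    1 + B.trace ≤ (1 + B).det := by
  rw [hB.isHermitian.det_one_add, hB.isHermitian.trace_eq_sum_eigenvalues]
  exact one_add_sum_le_prod_one_add _ fun i _ => hB.eigenvalues_nonneg i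

open scoped MatrixOrder in
theorem Matrix.PosDef.det_mul_one_add_trace_le_det_add {S M : Matrix n n ℝ} (hS : S.PosDef)
    (hM : M.PosSemidef) : S.det * (1 + (M * S⁻¹).trace) ≤ (S + M).det := by
  set R := CFC.sqrt M
  have hRR : R * R = M := CFC.sqrt_mul_sqrt_self M hM.nonneg
  have hR : Rᴴ = R := (CFC.sqrt_nonneg M).posSemidef.isHermitian
  have hfactor : S + M = S * (1 + S⁻¹ * M) := by
    rw [Matrix.mul_add, Matrix.mul_one, ← Matrix.mul_assoc, mul_nonsing_inv _ hS.det_pos.ne'.isUnit,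
      one_mul]
  -- Sylvester's identity `det (1 + XY) = det (1 + YX)` makes the factor symmetric.
  have hsym : (1 + S⁻¹ * M).det = (1 + R * S⁻¹ * R).det := by
    rw [← hRR, ← Matrix.mul_assoc, det_one_add_mul_comm, ← Matrix.mul_assoc]
  have hpsd : (R * S⁻¹ * R).PosSemidef := by
    simpa only [hR] using hS.inv.posSemidef.conjTranspose_mul_mul_same R
  have htrace : (R * S⁻¹ * R).trace = (M * S⁻¹).trace := by
    rw [trace_mul_cycle, hRR]
  rw [hfactor, det_mul, hsym, ← htrace]
  exact mul_le_mul_of_nonneg_left hpsd.one_add_trace_le_det_one_add hS.det_pos.le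

theorem Matrix.PosDef.log_det_le {A : Matrix n n ℝ} (hA : A.PosDef) {c : ℝ} (hc : 0 < c) :
    Real.log A.det ≤ Fintype.card n * (Real.log c - 1) + A.trace / c := by
  have hdet : A.det = ∏ i, hA.isHermitian.eigenvalues i := by
    simpa using hA.isHermitian.det_eq_prod_eigenvalues
  have htr : A.trace = ∑ i, hA.isHermitian.eigenvalues i := by
    simpa using hA.isHermitian.trace_eq_sum_eigenvalues
  rw [hdet, htr, Real.log_prod fun i _ => (hA.eigenvalues_pos i).ne', sum_div,
    ← nsmul_eq_mul, ← card_univ, ← sum_const, ← sum_add_distrib]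
  refine sum_le_sum fun i _ => ?_
  have hpos := hA.eigenvalues_pos i
  have := Real.log_le_sub_one_of_pos (div_pos hpos hc)
  rw [Real.log_div hpos.ne' hc.ne'] at this
  linarith

end Fintype

/-- The statement's `Σ_t`. -/
def designMatrix (M : ℕ → Matrix n n ℝ) (t : ℕ) : Matrix n n ℝ :=
  1 + ∑ i ∈ Icc 1 t, M i

section designMatrix

variable {M : ℕ → Matrix n n ℝ} {T : ℕ}

@[simp]
theorem designMatrix_zero : designMatrix M 0 = 1 := by
  simp [designMatrix]

theorem designMatrix_succ (t : ℕ) : designMatrix M (t + 1) = designMatrix M t + M (t + 1) := by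
  rw [designMatrix, designMatrix, sum_Icc_succ_top (Nat.le_add_left 1 t), add_assoc]

theorem posDef_designMatrix (hpsd : ∀ t, 1 ≤ t → t ≤ T → (M t).PosSemidef) {t : ℕ}
    (ht : t ≤ T) : (designMatrix M t).PosDef := by
  induction t with
  | zero => simpa using PosDef.one
  | succ t ih =>
    rw [designMatrix_succ]
    exact (ih (by omega)).add_posSemidef (hpsd (t + 1) (by omega) ht)

variable [Fintype n]

theorem mul_log_le_log_det_designMatrix (hpsd : ∀ t, 1 ≤ t → t ≤ T → (M t).PosSemidef)
    {a : ℝ} (ha : 0 ≤ a)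
    (hlow : ∀ t, 1 ≤ t → t ≤ T → a ≤ (M t * (designMatrix M (t - 1))⁻¹).trace) :
    T * Real.log (1 + a) ≤ Real.log (designMatrix M T).det := by
  induction T with
  | zero => simp
  | succ T ih =>
    have hS := posDef_designMatrix (fun t h1 _ => hpsd t h1 (by omega)) (le_refl T)
    have hstep := hS.det_mul_one_add_trace_le_det_add (hpsd (T + 1) (by omega) le_rfl)
    have hlowT : a ≤ (M (T + 1) * (designMatrix M T)⁻¹).trace := by
      simpa using hlow (T + 1) (by omega) le_rfl
    have hpos : 0 < 1 + (M (T + 1) * (designMatrix M T)⁻¹).trace := by linarith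
    have hprev := ih (fun t h1 _ => hpsd t h1 (by omega)) (fun t h1 _ => hlow t h1 (by omega))
    rw [designMatrix_succ]
    calc ((T + 1 : ℕ) : ℝ) * Real.log (1 + a)
        ≤ Real.log (designMatrix M T).det + Real.log (1 + a) := by push_cast; linarith
      _ ≤ Real.log (designMatrix M T).det
          + Real.log (1 + (M (T + 1) * (designMatrix M T)⁻¹).trace) := by gcongr
      _ = Real.log ((designMatrix M T).det * (1 + (M (T + 1) * (designMatrix M T)⁻¹).trace)) :=
          (Real.log_mul hS.det_pos.ne' hpos.ne').symm
      _ ≤ _ := Real.log_le_log (mul_pos hS.det_pos hpos) hstep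

theorem trace_designMatrix_le (htr : ∀ t, 1 ≤ t → t ≤ T → (M t).trace ≤ 1) :
    (designMatrix M T).trace ≤ Fintype.card n + T := by
  have hsum : ∑ i ∈ Icc 1 T, (M i).trace ≤ ∑ _i ∈ Icc 1 T, (1 : ℝ) :=
    sum_le_sum fun i hi => htr i (mem_Icc.1 hi).1 (mem_Icc.1 hi).2
  simpa [designMatrix, trace_sum] using hsum

theorem log_det_designMatrix_le (hpsd : ∀ t, 1 ≤ t → t ≤ T → (M t).PosSemidef)
    (htr : ∀ t, 1 ≤ t → t ≤ T → (M t).trace ≤ 1) {c : ℝ} (hc : 1 ≤ c) :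
    Real.log (designMatrix M T).det ≤ Fintype.card n * Real.log c + T / c := by
  have hc0 : 0 < c := zero_lt_one.trans_le hc
  have hcard : (Fintype.card n : ℝ) / c ≤ Fintype.card n := div_le_self (Nat.cast_nonneg _) hc
  have htrace : (designMatrix M T).trace / c ≤ (Fintype.card n + T) / c := by
    gcongr
    exact trace_designMatrix_le htr
  have := (posDef_designMatrix hpsd le_rfl).log_det_le hc0
  rw [add_div] at htrace
  linarith

end designMatrix

theorem elliptical_potential_bound_general (d : ℕ)
    (β : ℝ) (hβ0 : 0 < β) (hβ1 : β ≤ 1)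
    (T : ℕ)
    (M : ℕ → Matrix (Fin d) (Fin d) ℝ)
    (hpsd : ∀ t, 1 ≤ t → t ≤ T → (M t).PosSemidef)
    (htr : ∀ t, 1 ≤ t → t ≤ T → (M t).trace ≤ 1)
    (hlow : ∀ t, 1 ≤ t → t ≤ T →
      β / 2 ≤ (M t * (1 + ∑ i ∈ Finset.Icc 1 (t - 1), M i)⁻¹).trace) :
    (T : ℝ) ≤ 8 * d / β * Real.log (1 + 8 / β) := by
  have hstep : β / 4 ≤ Real.log (1 + β / 2) := by
    refine le_trans ?_ (Real.le_log_one_add_of_nonneg (by positivity))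
    rw [le_div_iff₀ (by positivity)]
    nlinarith
  have hlower : T * (β / 4) ≤ Real.log (designMatrix M T).det :=
    (mul_le_mul_of_nonneg_left hstep T.cast_nonneg).trans
      (mul_log_le_log_det_designMatrix hpsd (by positivity) hlow)
  have hupper := log_det_designMatrix_le hpsd htr (c := 1 + 8 / β)
    (le_add_of_nonneg_right (by positivity))
  have hTc : (T : ℝ) / (1 + 8 / β) ≤ T * β / 8 := by
    rw [div_le_iff₀ (by positivity), mul_add, mul_one,
      show (T : ℝ) * β / 8 * (8 / β) = T by field_simp]
    linarith [show 0 ≤ (T : ℝ) * β / 8 by positivity]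
  rw [Fintype.card_fin] at hupper
  rw [div_mul_eq_mul_div, le_div_iff₀ hβ0]
  linarith

/-- **Elliptical potential termination bound (adaptation of FLAMBE Lemma 17).**
Let `M_1, …, M_T` be symmetric PSD `d × d` matrices with trace at most `1`, and set
`Σ_0 = I`, `Σ_t = Σ_{t−1} + M_t` (so `Σ_t = I + ∑_{i ≤ t} M_i`). If
`trace(M_t Σ_{t−1}^{−1}) ≥ β/2` for every `t ∈ {1, …, T}`, then
`T ≤ (8d/β) log(1 + 8/β)`. -/
theorem elliptical_potential_bound (d : ℕ) (hd : 1 ≤ d)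
    (β : ℝ) (hβ0 : 0 < β) (hβ1 : β ≤ 1)
    (T : ℕ) (hT : 1 ≤ T)
    (M : ℕ → Matrix (Fin d) (Fin d) ℝ)
    (hpsd : ∀ t, 1 ≤ t → t ≤ T → (M t).PosSemidef)
    (htr : ∀ t, 1 ≤ t → t ≤ T → (M t).trace ≤ 1)
    (hlow : ∀ t, 1 ≤ t → t ≤ T →
      β / 2 ≤ (M t * (1 + ∑ i ∈ Finset.Icc 1 (t - 1), M i)⁻¹).trace) :
    (T : ℝ) ≤ 8 * d / β * Real.log (1 + 8 / β) :=
  elliptical_potential_bound_general d β hβ0 hβ1 T M hpsd htr hlow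
end
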